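/- arXiv:math/0009124 — 3 statements merged into one kernel-verified Lean document; each statement's English description precedes it below -/
import Mathlib

section
/- Let P be a smooth manifold, E → P a smooth vector bundle, and {·,·} : C^∞(P) × Γ(E) → Γ(E) a bilinear bracket satisfying the first Leibniz identity {f, h·s} = {f,h}·s + h·{f,s} for all f,h ∈ C^∞(P), s ∈ Γ(E) (where {f,h} is a Poisson bracket on P). Then the second Leibniz identity {fh, s} = f{h,s} + h{f,s} holds for all f,h,s if and only if both: (i) {1, s} = 0 for all s ∈ Γ(E), and (ii) {f, s}(p) = 0 whenever f vanishes to second order at p. -/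
/-!
For a fixed section `s`, the map `f ↦ {f, s}` is `ℝ`-linear, and the second Leibniz identity says
exactly that it is a derivation `C^∞(P) → Γ(E)`. A derivation kills constants and sends
`(ker p)²` into `(ker p) • Γ(E)`. Conversely, writing `f = f(p) + u` and `h = h(p) + v` with
`u, v ∈ ker p`, a linear map killing constants has Leibniz defect at `(f, h)` equal to
`{uv, s} - u{v, s} - v{u, s}`, which vanishes at `p` when `{(ker p)², s}` does. A section
vanishing at every point is zero.
-/

theorem AlgHom.sub_algebraMap_mem_ker {K R : Type*} [CommRing K] [Ring R] [Algebra K R]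
    (p : R →ₐ[K] K) (f : R) : f - algebraMap K R (p f) ∈ RingHom.ker (p : R →+* K) := by
  simp [RingHom.mem_ker]

theorem Derivation.map_mem_smul_top_of_mem_sq {K R M : Type*} [CommSemiring K] [CommSemiring R]
    [Algebra K R] [AddCommMonoid M] [Module R M] [Module K M]
    (D : Derivation K R M) {I : Ideal R} {f : R} (hf : f ∈ I ^ 2) :
    D f ∈ I • (⊤ : Submodule R M) := by
  rw [pow_two] at hf
  refine Submodule.mul_induction_on hf (fun g hg k hk => ?_) (fun x y hx hy => ?_)
  · rw [D.leibniz]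
    exact add_mem (Submodule.smul_mem_smul hg trivial) (Submodule.smul_mem_smul hk trivial)
  · rw [map_add]
    exact add_mem hx hy

theorem LinearMap.leibniz_sub_mem_ker_smul_top {K R M : Type*} [CommRing K] [CommRing R]
    [Algebra K R] [AddCommGroup M] [Module R M] [Module K M] [IsScalarTower K R M]
    (d : R →ₗ[K] M) (hd₁ : d 1 = 0) (p : R →ₐ[K] K)
    (hd : ∀ f ∈ RingHom.ker (p : R →+* K) ^ 2,
      d f ∈ RingHom.ker (p : R →+* K) • (⊤ : Submodule R M))
    (f h : R) :
    d (f * h) - (f • d h + h • d f) ∈ RingHom.ker (p : R →+* K) • (⊤ : Submodule R M) := by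
  set I := RingHom.ker (p : R →+* K)
  have hd_const (c : K) : d (algebraMap K R c) = 0 := by
    rw [Algebra.algebraMap_eq_smul_one, map_smul, hd₁, smul_zero]
  suffices ∀ (c c' : K) (u v : R), u ∈ I → v ∈ I →
      d ((algebraMap K R c + u) * (algebraMap K R c' + v)) -
        ((algebraMap K R c + u) • d (algebraMap K R c' + v) +
          (algebraMap K R c' + v) • d (algebraMap K R c + u)) ∈ I • (⊤ : Submodule R M) by
    simpa using this (p f) (p h) _ _ (p.sub_algebraMap_mem_ker f) (p.sub_algebraMap_mem_ker h)
  intro c c' u v hu hv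
  have hexpand : (algebraMap K R c + u) * (algebraMap K R c' + v) =
      algebraMap K R (c * c') + c • v + c' • u + u * v := by
    simp only [map_mul, Algebra.smul_def]; ring
  have hdefect : d ((algebraMap K R c + u) * (algebraMap K R c' + v)) -
        ((algebraMap K R c + u) • d (algebraMap K R c' + v) +
          (algebraMap K R c' + v) • d (algebraMap K R c + u)) =
      d (u * v) - (u • d v + v • d u) := by
    simp only [hexpand, map_add, map_smul, hd_const, add_smul, algebraMap_smul, zero_add]
    abel
  rw [hdefect]
  refine sub_mem (hd _ ?_) (add_mem (Submodule.smul_mem_smul hu trivial)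
    (Submodule.smul_mem_smul hv trivial))
  rw [pow_two]
  exact Ideal.mul_mem_mul hu hv

theorem second_leibniz_iff_unit_and_second_order_vanishing_general
    (R : Type*) [CommRing R] [Algebra ℝ R]
    (M : Type*) [AddCommGroup M] [Module R M] [Module ℝ M] [IsScalarTower ℝ R M]
    -- the bracket `{·,·} : C^∞(P) × Γ(E) → Γ(E)`, ℝ-bilinear
    (b : R → M → M)
    (hb_add_left : ∀ (f g : R) (s : M), b (f + g) s = b f s + b g s)
    (hb_smul_left : ∀ (a : ℝ) (f : R) (s : M), b (a • f) s = a • b f s)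
    -- sections are separated by evaluation at points
    (hsep : ∀ m : M,
      (∀ p : R →ₐ[ℝ] ℝ, m ∈ (RingHom.ker (p : R →+* ℝ)) • (⊤ : Submodule R M)) → m = 0) :
    -- the second Leibniz identity (L2) holds
    (∀ (f h : R) (s : M), b (f * h) s = f • b h s + h • b f s) ↔
      -- iff (i) `{1, s} = 0` and (ii) `{f, s}(p) = 0` whenever `f` vanishes to second
      -- order at `p`
      ((∀ s : M, b 1 s = 0) ∧
        (∀ (p : R →ₐ[ℝ] ℝ) (f : R) (s : M), f ∈ (RingHom.ker (p : R →+* ℝ)) ^ 2 →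
          b f s ∈ (RingHom.ker (p : R →+* ℝ)) • (⊤ : Submodule R M))) := by
  let d (s : M) : R →ₗ[ℝ] M :=
    { toFun := (b · s), map_add' := (hb_add_left · · s), map_smul' := (hb_smul_left · · s) }
  constructor
  · intro hL2
    let D (s : M) : Derivation ℝ R M := Derivation.mk' (d s) (hL2 · · s)
    exact ⟨fun s => (D s).map_one_eq_zero, fun p f s hf => (D s).map_mem_smul_top_of_mem_sq hf⟩
  · rintro ⟨h_one, h_sq⟩ f h s
    exact sub_eq_zero.mp <| hsep _ fun p =>
      (d s).leibniz_sub_mem_ker_smul_top (h_one s) p (fun f hf => h_sq p f s hf) f h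

theorem second_leibniz_iff_unit_and_second_order_vanishing
    (R : Type*) [CommRing R] [Algebra ℝ R]
    (M : Type*) [AddCommGroup M] [Module R M] [Module ℝ M] [IsScalarTower ℝ R M]
    -- the Poisson bracket on `C^∞(P)`
    (Pb : R → R → R)
    (hPb_add_left : ∀ f g h : R, Pb (f + g) h = Pb f h + Pb g h)
    (hPb_smul_left : ∀ (a : ℝ) (f h : R), Pb (a • f) h = a • Pb f h)
    (hPb_skew : ∀ f h : R, Pb f h = - Pb h f)
    (hPb_leibniz : ∀ f g h : R, Pb f (g * h) = g * Pb f h + h * Pb f g)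
    (hPb_jacobi : ∀ f g h : R, Pb f (Pb g h) = Pb (Pb f g) h + Pb g (Pb f h))
    -- the bracket `{·,·} : C^∞(P) × Γ(E) → Γ(E)`, ℝ-bilinear
    (b : R → M → M)
    (hb_add_left : ∀ (f g : R) (s : M), b (f + g) s = b f s + b g s)
    (hb_smul_left : ∀ (a : ℝ) (f : R) (s : M), b (a • f) s = a • b f s)
    (hb_add_right : ∀ (f : R) (s t : M), b f (s + t) = b f s + b f t)
    (hb_smul_right : ∀ (a : ℝ) (f : R) (s : M), b f (a • s) = a • b f s)
    -- `Γ(E)` is a Lie algebra module over `C^∞(P)`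
    (hb_lie : ∀ (f h : R) (s : M), b f (b h s) - b h (b f s) = b (Pb f h) s)
    -- the first Leibniz identity (L1)
    (hL1 : ∀ (f h : R) (s : M), b f (h • s) = (Pb f h) • s + h • b f s)
    -- sections are separated by evaluation at points
    (hsep : ∀ m : M,
      (∀ p : R →ₐ[ℝ] ℝ, m ∈ (RingHom.ker (p : R →+* ℝ)) • (⊤ : Submodule R M)) → m = 0) :
    -- the second Leibniz identity (L2) holds
    (∀ (f h : R) (s : M), b (f * h) s = f • b h s + h • b f s) ↔
      -- iff (i) `{1, s} = 0` and (ii) `{f, s}(p) = 0` whenever `f` vanishes to second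
      -- order at `p`
      ((∀ s : M, b 1 s = 0) ∧
        (∀ (p : R →ₐ[ℝ] ℝ) (f : R) (s : M), f ∈ (RingHom.ker (p : R →+* ℝ)) ^ 2 →
          b f s ∈ (RingHom.ker (p : R →+* ℝ)) • (⊤ : Submodule R M))) :=
  second_leibniz_iff_unit_and_second_order_vanishing_general R M b hb_add_left hb_smul_left hsep
end

section
/- Let ℊ be a finite-dimensional Lie algebra, V a finite-dimensional representation of ℊ, and give ℊ* its Lie–Poisson structure. Define on the trivial bundle E = ℊ* × V the bracket {f, s}(p) = df(p)·s(p) + (L_{X_f} s)(p), where df(p) ∈ T_p*ℊ* = ℊ acts on s(p) ∈ V via the representation and X_f is the Hamiltonian vector field of f. Then this bracket satisfies both Leibniz identities (L1) and (L2) and makes Γ(E) a Lie module over C^∞(ℊ*), i.e., E is a Poisson vector bundle over ℊ*. -/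
/-!
STATEMENT 3 (Example 2.5).  Let `𝔤` be a finite-dimensional Lie algebra, presented in a
basis as `Fin n → ℝ` with Lie bracket `ℓ` (bilinear, antisymmetric, Jacobi), and let
`V = Fin m → ℝ` carry a representation `ρ` of `𝔤`.  On `𝔤* = Fin n → ℝ` (coordinates
dual to the chosen basis) we have the Lie–Poisson bracket
`{f,h}(p) = ⟨p, [df(p), dh(p)]⟩`, and for the trivial bundle `E = 𝔤* × V` with
`Γ(E) = C^∞(𝔤*, V)` the bracket `{f,s}(p) = df(p)·s(p) + (L_{X_f}s)(p)` satisfies the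
two Leibniz identities (L1), (L2) and makes `Γ(E)` a Lie module over `C^∞(𝔤*)`, i.e.
`E` is a Poisson vector bundle over `𝔤*`.
-/

/-- The differential `df(p)`, viewed as an element of `𝔤` via the dual basis. -/
noncomputable def diffAt (n : ℕ) (f : (Fin n → ℝ) → ℝ) (p : Fin n → ℝ) : Fin n → ℝ :=
  fun i => fderiv ℝ f p (Pi.single i 1)

/-- The pairing between `𝔤*` and `𝔤`. -/
noncomputable def pairg (n : ℕ) (p x : Fin n → ℝ) : ℝ := ∑ i, p i * x i

/-- The Lie–Poisson bracket on `𝔤*`: `{f,h}(p) = ⟨p, [df(p), dh(p)]⟩`. -/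
noncomputable def liePoisson (n : ℕ)
    (ℓ : (Fin n → ℝ) →ₗ[ℝ] (Fin n → ℝ) →ₗ[ℝ] (Fin n → ℝ))
    (f h : (Fin n → ℝ) → ℝ) (p : Fin n → ℝ) : ℝ :=
  pairg n p (ℓ (diffAt n f p) (diffAt n h p))

/-- The Hamiltonian vector field `X_f` of `f` on `𝔤*`. -/
noncomputable def hamVF (n : ℕ)
    (ℓ : (Fin n → ℝ) →ₗ[ℝ] (Fin n → ℝ) →ₗ[ℝ] (Fin n → ℝ))
    (f : (Fin n → ℝ) → ℝ) (p : Fin n → ℝ) : Fin n → ℝ :=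
  fun j => pairg n p (ℓ (diffAt n f p) (Pi.single j 1))

/-- The bracket `{f,s}(p) = df(p)·s(p) + (L_{X_f}s)(p)` on sections of `𝔤* × V`. -/
noncomputable def pvbBracket (n m : ℕ)
    (ℓ : (Fin n → ℝ) →ₗ[ℝ] (Fin n → ℝ) →ₗ[ℝ] (Fin n → ℝ))
    (ρ : (Fin n → ℝ) →ₗ[ℝ] ((Fin m → ℝ) →ₗ[ℝ] (Fin m → ℝ)))
    (f : (Fin n → ℝ) → ℝ) (s : (Fin n → ℝ) → (Fin m → ℝ)) (p : Fin n → ℝ) :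
    Fin m → ℝ :=
  ρ (diffAt n f p) (s p) + fderiv ℝ s p (hamVF n ℓ f p)

/-- evaluation of a functional on all basis vectors, as a CLM -/
noncomputable def evalAll (n : ℕ) : ((Fin n → ℝ) →L[ℝ] ℝ) →L[ℝ] (Fin n → ℝ) :=
  ContinuousLinearMap.pi fun i => ContinuousLinearMap.apply ℝ ℝ (Pi.single i 1)

lemma evalAll_apply {n : ℕ} (T : (Fin n → ℝ) →L[ℝ] ℝ) (i : Fin n) :
    evalAll n T i = T (Pi.single i 1) := rfl

/-- continuous version of a bilinear map out of finite dimensional spaces -/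
noncomputable def bilinCLM {n : ℕ} {V W : Type*} [NormedAddCommGroup V] [NormedSpace ℝ V]
    [NormedAddCommGroup W] [NormedSpace ℝ W] [FiniteDimensional ℝ V]
    (B : (Fin n → ℝ) →ₗ[ℝ] V →ₗ[ℝ] W) : (Fin n → ℝ) →L[ℝ] V →L[ℝ] W :=
  LinearMap.toContinuousLinearMap
    { toFun := fun x => LinearMap.toContinuousLinearMap (B x)
      map_add' := by intro x y; ext v; simp
      map_smul' := by intro c x; ext v; simp }

@[simp] lemma bilinCLM_apply {n : ℕ} {V W : Type*} [NormedAddCommGroup V] [NormedSpace ℝ V]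
    [NormedAddCommGroup W] [NormedSpace ℝ W] [FiniteDimensional ℝ V]
    (B : (Fin n → ℝ) →ₗ[ℝ] V →ₗ[ℝ] W) (x : Fin n → ℝ) (v : V) :
    bilinCLM B x v = B x v := rfl

lemma single_eq_ite {n : ℕ} (i : Fin n) :
    (Pi.single i 1 : Fin n → ℝ) = fun j => if i = j then 1 else 0 :=
  funext fun j => by rw [Pi.single_apply]; simp [eq_comm]

lemma clm_apply_sum {n : ℕ} {W : Type*} [NormedAddCommGroup W] [NormedSpace ℝ W]
    (T : (Fin n → ℝ) →L[ℝ] W) (v : Fin n → ℝ) :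
    T v = ∑ i, v i • T (Pi.single i 1) := by
  simp only [single_eq_ite]
  exact LinearMap.pi_apply_eq_sum_univ (T : (Fin n → ℝ) →ₗ[ℝ] W) v

lemma pairg_apply_lin {n : ℕ} (p : Fin n → ℝ) (L : (Fin n → ℝ) →ₗ[ℝ] (Fin n → ℝ))
    (x : Fin n → ℝ) :
    pairg n p (L x) = ∑ k, x k * pairg n p (L (Pi.single k 1)) := by
  rw [show L x = ∑ k, x k • L (Pi.single k 1) by
    simp only [single_eq_ite]; exact LinearMap.pi_apply_eq_sum_univ L x]
  simp only [pairg, Finset.sum_apply, Pi.smul_apply, smul_eq_mul, Finset.mul_sum]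
  rw [Finset.sum_comm]
  exact Finset.sum_congr rfl fun k _ => Finset.sum_congr rfl fun i _ => by ring

@[simp] lemma pairg_single {n : ℕ} (i : Fin n) (x : Fin n → ℝ) :
    pairg n (Pi.single i 1) x = x i := by
  simp [pairg, Pi.single_apply, Finset.sum_ite_eq]

lemma pairg_add_left {n : ℕ} (p q x : Fin n → ℝ) :
    pairg n (p + q) x = pairg n p x + pairg n q x := by
  simp [pairg, add_mul, Finset.sum_add_distrib]

lemma pairg_smul_left {n : ℕ} (c : ℝ) (p x : Fin n → ℝ) :
    pairg n (c • p) x = c * pairg n p x := by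
  simp [pairg, Finset.mul_sum, mul_assoc]

lemma pairg_add_right {n : ℕ} (p x y : Fin n → ℝ) :
    pairg n p (x + y) = pairg n p x + pairg n p y := by
  simp [pairg, mul_add, Finset.sum_add_distrib]

lemma pairg_smul_right {n : ℕ} (c : ℝ) (p x : Fin n → ℝ) :
    pairg n p (c • x) = c * pairg n p x := by
  simp only [pairg, Pi.smul_apply, smul_eq_mul, Finset.mul_sum]
  exact Finset.sum_congr rfl fun i _ => by ring

lemma pairg_sub_right {n : ℕ} (p x y : Fin n → ℝ) :
    pairg n p (x - y) = pairg n p x - pairg n p y := by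
  simp only [pairg, Pi.sub_apply, mul_sub, Finset.sum_sub_distrib]

/-- the pairing as a bilinear map -/
noncomputable def pairL (n : ℕ) : (Fin n → ℝ) →ₗ[ℝ] (Fin n → ℝ) →ₗ[ℝ] ℝ :=
  LinearMap.mk₂ ℝ (pairg n) pairg_add_left pairg_smul_left pairg_add_right pairg_smul_right

/-- the "Hamiltonian pairing" `hamv p a = (j ↦ ⟨p, ℓ(a, e_j)⟩)`. -/
noncomputable def hamv (n : ℕ) (ℓ : (Fin n → ℝ) →ₗ[ℝ] (Fin n → ℝ) →ₗ[ℝ] (Fin n → ℝ))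
    (p a : Fin n → ℝ) : Fin n → ℝ :=
  fun j => pairg n p (ℓ a (Pi.single j 1))

/-- `hamv` as a bilinear map -/
noncomputable def hamB (n : ℕ) (ℓ : (Fin n → ℝ) →ₗ[ℝ] (Fin n → ℝ) →ₗ[ℝ] (Fin n → ℝ)) :
    (Fin n → ℝ) →ₗ[ℝ] (Fin n → ℝ) →ₗ[ℝ] (Fin n → ℝ) :=
  LinearMap.mk₂ ℝ (hamv n ℓ)
    (fun p q a => by funext j; simp [hamv, pairg_add_left])
    (fun c p a => by funext j; simp [hamv, pairg_smul_left])
    (fun p a b => by funext j; simp [hamv, map_add, LinearMap.add_apply, pairg_add_right])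
    (fun c p a => by funext j; simp [hamv, map_smul, LinearMap.smul_apply, pairg_smul_right])

lemma contract {n : ℕ} (ℓ : (Fin n → ℝ) →ₗ[ℝ] (Fin n → ℝ) →ₗ[ℝ] (Fin n → ℝ))
    (p a x : Fin n → ℝ) :
    pairg n p (ℓ a x) = ∑ k, x k * pairg n p (ℓ a (Pi.single k 1)) :=
  pairg_apply_lin p (ℓ a) x

lemma pair_hamv {n : ℕ} (ℓ : (Fin n → ℝ) →ₗ[ℝ] (Fin n → ℝ) →ₗ[ℝ] (Fin n → ℝ))
    (p a b : Fin n → ℝ) :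
    pairg n (hamv n ℓ p a) b = pairg n p (ℓ a b) := by
  rw [contract ℓ p a b]
  simp only [pairg, hamv]
  exact Finset.sum_congr rfl fun k _ => by ring

lemma jacobi_hamv {n : ℕ} (ℓ : (Fin n → ℝ) →ₗ[ℝ] (Fin n → ℝ) →ₗ[ℝ] (Fin n → ℝ))
    (hjacobi : ∀ x y z, ℓ x (ℓ y z) = ℓ (ℓ x y) z + ℓ y (ℓ x z))
    (p a b : Fin n → ℝ) :
    hamv n ℓ (hamv n ℓ p a) b - hamv n ℓ (hamv n ℓ p b) a = hamv n ℓ p (ℓ a b) := by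
  funext j
  simp only [Pi.sub_apply, hamv, pair_hamv]
  rw [show ℓ (ℓ a b) (Pi.single j 1) = ℓ a (ℓ b (Pi.single j 1)) - ℓ b (ℓ a (Pi.single j 1)) by
    rw [hjacobi a b (Pi.single j 1)]; abel]
  rw [pairg_sub_right]

lemma hamVF_eq_hamv {n : ℕ} (ℓ : (Fin n → ℝ) →ₗ[ℝ] (Fin n → ℝ) →ₗ[ℝ] (Fin n → ℝ))
    (f : (Fin n → ℝ) → ℝ) (p : Fin n → ℝ) :
    hamVF n ℓ f p = hamv n ℓ p (diffAt n f p) := rfl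

section calculus

variable {n m : ℕ}

lemma hasFDerivAt_diffAt {f : (Fin n → ℝ) → ℝ} (hf : ContDiff ℝ (⊤ : ℕ∞) f) (p : Fin n → ℝ) :
    HasFDerivAt (diffAt n f) ((evalAll n).comp (fderiv ℝ (fderiv ℝ f) p)) p := by
  have h1 : HasFDerivAt (fderiv ℝ f) (fderiv ℝ (fderiv ℝ f) p) p :=
    (((hf.fderiv_right (m := 1) (by norm_cast)).differentiable one_ne_zero) p).hasFDerivAt
  exact (evalAll n).hasFDerivAt.comp p h1

lemma hasFDerivAt_hamVF (ℓ : (Fin n → ℝ) →ₗ[ℝ] (Fin n → ℝ) →ₗ[ℝ] (Fin n → ℝ))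
    {f : (Fin n → ℝ) → ℝ} (hf : ContDiff ℝ (⊤ : ℕ∞) f) (p : Fin n → ℝ) :
    HasFDerivAt (hamVF n ℓ f)
      ((bilinCLM (hamB n ℓ) p).comp ((evalAll n).comp (fderiv ℝ (fderiv ℝ f) p))
        + (bilinCLM (hamB n ℓ)).flip (diffAt n f p)) p := by
  have hc : HasFDerivAt (fun q => bilinCLM (hamB n ℓ) q) (bilinCLM (hamB n ℓ)) p :=
    (bilinCLM (hamB n ℓ)).hasFDerivAt
  exact hc.clm_apply (hasFDerivAt_diffAt hf p)

lemma fderiv_apply_hamVF (ℓ : (Fin n → ℝ) →ₗ[ℝ] (Fin n → ℝ) →ₗ[ℝ] (Fin n → ℝ))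
    (f h : (Fin n → ℝ) → ℝ) (p : Fin n → ℝ) :
    fderiv ℝ h p (hamVF n ℓ f p) = liePoisson n ℓ f h p := by
  rw [clm_apply_sum (fderiv ℝ h p) (hamVF n ℓ f p)]
  rw [show liePoisson n ℓ f h p = pairg n (hamv n ℓ p (diffAt n f p)) (diffAt n h p) from
    (pair_hamv ℓ p _ _).symm]
  rw [← hamVF_eq_hamv]
  simp only [pairg, smul_eq_mul]
  exact Finset.sum_congr rfl fun j _ => rfl

lemma hasFDerivAt_pvb (ℓ : (Fin n → ℝ) →ₗ[ℝ] (Fin n → ℝ) →ₗ[ℝ] (Fin n → ℝ))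
    (ρ : (Fin n → ℝ) →ₗ[ℝ] ((Fin m → ℝ) →ₗ[ℝ] (Fin m → ℝ)))
    {f : (Fin n → ℝ) → ℝ} {s : (Fin n → ℝ) → (Fin m → ℝ)}
    (hf : ContDiff ℝ (⊤ : ℕ∞) f) (hs : ContDiff ℝ (⊤ : ℕ∞) s) (p : Fin n → ℝ) :
    HasFDerivAt (pvbBracket n m ℓ ρ f s)
      (((bilinCLM ρ (diffAt n f p)).comp (fderiv ℝ s p)
          + ((bilinCLM ρ).comp ((evalAll n).comp (fderiv ℝ (fderiv ℝ f) p))).flip (s p))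
        + ((fderiv ℝ s p).comp
             ((bilinCLM (hamB n ℓ) p).comp ((evalAll n).comp (fderiv ℝ (fderiv ℝ f) p))
               + (bilinCLM (hamB n ℓ)).flip (diffAt n f p))
           + (fderiv ℝ (fderiv ℝ s) p).flip (hamVF n ℓ f p))) p := by
  have h1 : HasFDerivAt (fun q => bilinCLM ρ (diffAt n f q))
      ((bilinCLM ρ).comp ((evalAll n).comp (fderiv ℝ (fderiv ℝ f) p))) p :=
    (bilinCLM ρ).hasFDerivAt.comp p (hasFDerivAt_diffAt hf p)
  have h2 := h1.clm_apply (hs.differentiable (by simp) p).hasFDerivAt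
  have h3 : HasFDerivAt (fderiv ℝ s) (fderiv ℝ (fderiv ℝ s) p) p :=
    ((hs.fderiv_right (m := 1) (by norm_cast)).differentiable one_ne_zero p).hasFDerivAt
  have h4 := h3.clm_apply (hasFDerivAt_hamVF ℓ hf p)
  exact h2.add h4

lemma hasFDerivAt_liePoisson (ℓ : (Fin n → ℝ) →ₗ[ℝ] (Fin n → ℝ) →ₗ[ℝ] (Fin n → ℝ))
    {f h : (Fin n → ℝ) → ℝ} (hf : ContDiff ℝ (⊤ : ℕ∞) f) (hh : ContDiff ℝ (⊤ : ℕ∞) h) (p : Fin n → ℝ) :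
    HasFDerivAt (liePoisson n ℓ f h)
      ((bilinCLM (pairL n) p).comp
          ((bilinCLM ℓ (diffAt n f p)).comp ((evalAll n).comp (fderiv ℝ (fderiv ℝ h) p))
            + ((bilinCLM ℓ).comp ((evalAll n).comp (fderiv ℝ (fderiv ℝ f) p))).flip
                (diffAt n h p))
        + (bilinCLM (pairL n)).flip (ℓ (diffAt n f p) (diffAt n h p))) p := by
  have h1 : HasFDerivAt (fun q => bilinCLM ℓ (diffAt n f q))
      ((bilinCLM ℓ).comp ((evalAll n).comp (fderiv ℝ (fderiv ℝ f) p))) p :=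
    (bilinCLM ℓ).hasFDerivAt.comp p (hasFDerivAt_diffAt hf p)
  have h2 := h1.clm_apply (hasFDerivAt_diffAt hh p)
  have hc : HasFDerivAt (fun q => bilinCLM (pairL n) q) (bilinCLM (pairL n)) p :=
    (bilinCLM (pairL n)).hasFDerivAt
  exact hc.clm_apply h2

end calculus

section applied

variable {n m : ℕ}

@[simp] lemma hamB_apply (n : ℕ) (ℓ : (Fin n → ℝ) →ₗ[ℝ] (Fin n → ℝ) →ₗ[ℝ] (Fin n → ℝ))
    (p a : Fin n → ℝ) : hamB n ℓ p a = hamv n ℓ p a := rfl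

@[simp] lemma pairL_apply (n : ℕ) (p x : Fin n → ℝ) : pairL n p x = pairg n p x := rfl

lemma fderiv_pvb_apply (ℓ : (Fin n → ℝ) →ₗ[ℝ] (Fin n → ℝ) →ₗ[ℝ] (Fin n → ℝ))
    (ρ : (Fin n → ℝ) →ₗ[ℝ] ((Fin m → ℝ) →ₗ[ℝ] (Fin m → ℝ)))
    {f : (Fin n → ℝ) → ℝ} {s : (Fin n → ℝ) → (Fin m → ℝ)}
    (hf : ContDiff ℝ (⊤ : ℕ∞) f) (hs : ContDiff ℝ (⊤ : ℕ∞) s) (p v : Fin n → ℝ) :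
    fderiv ℝ (pvbBracket n m ℓ ρ f s) p v
      = ρ (diffAt n f p) (fderiv ℝ s p v)
        + ρ (evalAll n (fderiv ℝ (fderiv ℝ f) p v)) (s p)
        + fderiv ℝ s p (hamv n ℓ p (evalAll n (fderiv ℝ (fderiv ℝ f) p v)))
        + fderiv ℝ s p (hamv n ℓ v (diffAt n f p))
        + fderiv ℝ (fderiv ℝ s) p v (hamVF n ℓ f p) := by
  rw [(hasFDerivAt_pvb ℓ ρ hf hs p).fderiv]
  simp only [ContinuousLinearMap.add_apply, ContinuousLinearMap.coe_comp', Function.comp_apply,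
    ContinuousLinearMap.flip_apply, bilinCLM_apply, hamB_apply, map_add]
  abel

lemma fderiv_liePoisson_apply (ℓ : (Fin n → ℝ) →ₗ[ℝ] (Fin n → ℝ) →ₗ[ℝ] (Fin n → ℝ))
    {f h : (Fin n → ℝ) → ℝ} (hf : ContDiff ℝ (⊤ : ℕ∞) f) (hh : ContDiff ℝ (⊤ : ℕ∞) h) (p v : Fin n → ℝ) :
    fderiv ℝ (liePoisson n ℓ f h) p v
      = pairg n p (ℓ (diffAt n f p) (evalAll n (fderiv ℝ (fderiv ℝ h) p v)))
        + pairg n p (ℓ (evalAll n (fderiv ℝ (fderiv ℝ f) p v)) (diffAt n h p))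
        + pairg n v (ℓ (diffAt n f p) (diffAt n h p)) := by
  rw [(hasFDerivAt_liePoisson ℓ hf hh p).fderiv]
  simp only [ContinuousLinearMap.add_apply, ContinuousLinearMap.coe_comp', Function.comp_apply,
    ContinuousLinearMap.flip_apply, bilinCLM_apply, pairL_apply, map_add, pairg_add_right]

end applied

section key

variable {n m : ℕ}

lemma snd_symm {W : Type*} [NormedAddCommGroup W] [NormedSpace ℝ W]
    {f : (Fin n → ℝ) → W} (hf : ContDiff ℝ (⊤ : ℕ∞) f) (p v w : Fin n → ℝ) :
    fderiv ℝ (fderiv ℝ f) p v w = fderiv ℝ (fderiv ℝ f) p w v :=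
  second_derivative_symmetric (fun y => (hf.differentiable (by simp) y).hasFDerivAt)
    (((hf.fderiv_right (m := 1) (by norm_cast)).differentiable one_ne_zero p).hasFDerivAt) v w

/-- contraction with a second derivative, using symmetry -/
lemma sym_contract {f : (Fin n → ℝ) → ℝ} (hf : ContDiff ℝ (⊤ : ℕ∞) f) (p : Fin n → ℝ)
    (c : Fin n → ℝ) (i : Fin n) :
    ∑ k, (evalAll n (fderiv ℝ (fderiv ℝ f) p (Pi.single i 1))) k * c k
      = fderiv ℝ (fderiv ℝ f) p c (Pi.single i 1) := by
  rw [clm_apply_sum (fderiv ℝ (fderiv ℝ f) p) c]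
  rw [ContinuousLinearMap.sum_apply]
  refine Finset.sum_congr rfl fun k _ => ?_
  rw [ContinuousLinearMap.smul_apply, smul_eq_mul, evalAll_apply,
    snd_symm hf p (Pi.single i 1) (Pi.single k 1)]
  ring

lemma diffAt_liePoisson (ℓ : (Fin n → ℝ) →ₗ[ℝ] (Fin n → ℝ) →ₗ[ℝ] (Fin n → ℝ))
    (hskew : ∀ x y, ℓ x y = - ℓ y x)
    {f h : (Fin n → ℝ) → ℝ} (hf : ContDiff ℝ (⊤ : ℕ∞) f) (hh : ContDiff ℝ (⊤ : ℕ∞) h) (p : Fin n → ℝ) :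
    diffAt n (liePoisson n ℓ f h) p
      = ℓ (diffAt n f p) (diffAt n h p)
        + evalAll n (fderiv ℝ (fderiv ℝ h) p (hamVF n ℓ f p))
        - evalAll n (fderiv ℝ (fderiv ℝ f) p (hamVF n ℓ h p)) := by
  funext i
  have e1 : diffAt n (liePoisson n ℓ f h) p i
      = fderiv ℝ (liePoisson n ℓ f h) p (Pi.single i 1) := rfl
  rw [e1, fderiv_liePoisson_apply ℓ hf hh p (Pi.single i 1)]
  have eA : pairg n p (ℓ (diffAt n f p) (evalAll n (fderiv ℝ (fderiv ℝ h) p (Pi.single i 1))))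
      = fderiv ℝ (fderiv ℝ h) p (hamVF n ℓ f p) (Pi.single i 1) := by
    rw [contract ℓ p (diffAt n f p) _, ← sym_contract hh p (hamVF n ℓ f p) i]
    exact Finset.sum_congr rfl fun k _ => by rw [hamVF]
  have eB : pairg n p (ℓ (evalAll n (fderiv ℝ (fderiv ℝ f) p (Pi.single i 1))) (diffAt n h p))
      = - fderiv ℝ (fderiv ℝ f) p (hamVF n ℓ h p) (Pi.single i 1) := by
    rw [hskew, show pairg n p (-ℓ (diffAt n h p) (evalAll n (fderiv ℝ (fderiv ℝ f) p (Pi.single i 1))))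
        = - pairg n p (ℓ (diffAt n h p) (evalAll n (fderiv ℝ (fderiv ℝ f) p (Pi.single i 1)))) by
      rw [show (-ℓ (diffAt n h p) (evalAll n (fderiv ℝ (fderiv ℝ f) p (Pi.single i 1))))
          = (0 : Fin n → ℝ) - ℓ (diffAt n h p) (evalAll n (fderiv ℝ (fderiv ℝ f) p (Pi.single i 1))) by abel,
        pairg_sub_right]
      simp [pairg]]
    rw [contract ℓ p (diffAt n h p) _, ← sym_contract hf p (hamVF n ℓ h p) i]
    rw [neg_inj]
    exact Finset.sum_congr rfl fun k _ => by rw [hamVF]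
  rw [eA, eB]
  simp only [Pi.add_apply, Pi.sub_apply, pairg_single, evalAll_apply]
  ring

end key

section final
variable {n m : ℕ}

lemma hamv_add_right (ℓ : (Fin n → ℝ) →ₗ[ℝ] (Fin n → ℝ) →ₗ[ℝ] (Fin n → ℝ)) (p x y : Fin n → ℝ) :
    hamv n ℓ p (x + y) = hamv n ℓ p x + hamv n ℓ p y := map_add (hamB n ℓ p) x y

lemma hamv_sub_right (ℓ : (Fin n → ℝ) →ₗ[ℝ] (Fin n → ℝ) →ₗ[ℝ] (Fin n → ℝ)) (p x y : Fin n → ℝ) :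
    hamv n ℓ p (x - y) = hamv n ℓ p x - hamv n ℓ p y := map_sub (hamB n ℓ p) x y

lemma hamv_smul_right (ℓ : (Fin n → ℝ) →ₗ[ℝ] (Fin n → ℝ) →ₗ[ℝ] (Fin n → ℝ)) (c : ℝ) (p x : Fin n → ℝ) :
    hamv n ℓ p (c • x) = c • hamv n ℓ p x := map_smul (hamB n ℓ p) c x

end final

theorem lie_algebra_dual_poisson_vector_bundle (n m : ℕ)
    (ℓ : (Fin n → ℝ) →ₗ[ℝ] (Fin n → ℝ) →ₗ[ℝ] (Fin n → ℝ))
    (hskew : ∀ x y, ℓ x y = - ℓ y x)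
    (hjacobi : ∀ x y z, ℓ x (ℓ y z) = ℓ (ℓ x y) z + ℓ y (ℓ x z))
    (ρ : (Fin n → ℝ) →ₗ[ℝ] ((Fin m → ℝ) →ₗ[ℝ] (Fin m → ℝ)))
    (hrep : ∀ x y, ρ (ℓ x y) = ρ x ∘ₗ ρ y - ρ y ∘ₗ ρ x)
    (f h : (Fin n → ℝ) → ℝ) (s : (Fin n → ℝ) → (Fin m → ℝ))
    (hf : ContDiff ℝ (⊤ : ℕ∞) f) (hh : ContDiff ℝ (⊤ : ℕ∞) h) (hs : ContDiff ℝ (⊤ : ℕ∞) s) :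
    -- (L1): `{f, h·s} = {f,h}·s + h·{f,s}`
    (∀ p, pvbBracket n m ℓ ρ f (fun q => h q • s q) p =
        liePoisson n ℓ f h p • s p + h p • pvbBracket n m ℓ ρ f s p) ∧
    -- (L2): `{f·h, s} = f·{h,s} + h·{f,s}`
    (∀ p, pvbBracket n m ℓ ρ (fun q => f q * h q) s p =
        f p • pvbBracket n m ℓ ρ h s p + h p • pvbBracket n m ℓ ρ f s p) ∧
    -- `Γ(E)` is a Lie algebra module over `C^∞(𝔤*)`
    (∀ p, pvbBracket n m ℓ ρ f (pvbBracket n m ℓ ρ h s) p -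
        pvbBracket n m ℓ ρ h (pvbBracket n m ℓ ρ f s) p =
        pvbBracket n m ℓ ρ (liePoisson n ℓ f h) s p) := by
  refine ⟨fun p => ?_, fun p => ?_, fun p => ?_⟩
  · -- (L1)
    rw [pvbBracket, pvbBracket,
      fderiv_fun_smul (hh.differentiable (by simp) p) (hs.differentiable (by simp) p)]
    simp only [ContinuousLinearMap.add_apply, ContinuousLinearMap.coe_smul',
      Pi.smul_apply, ContinuousLinearMap.smulRight_apply, map_smul,
      fderiv_apply_hamVF ℓ f h p, smul_add]
    abel
  · -- (L2)
    have hd : diffAt n (fun q => f q * h q) p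
        = f p • diffAt n h p + h p • diffAt n f p := by
      funext i
      have e : diffAt n (fun q => f q * h q) p i
          = fderiv ℝ (fun q => f q * h q) p (Pi.single i 1) := rfl
      rw [e, fderiv_fun_mul (hf.differentiable (by simp) p) (hh.differentiable (by simp) p)]
      simp [diffAt]
    rw [pvbBracket, pvbBracket, pvbBracket,
      hamVF_eq_hamv ℓ (fun q => f q * h q) p, hd, hamv_add_right, hamv_smul_right,
      hamv_smul_right, ← hamVF_eq_hamv, ← hamVF_eq_hamv]
    simp only [map_add, map_smul, LinearMap.add_apply, LinearMap.smul_apply, smul_add]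
    abel
  · -- (L3) Jacobi / Lie module identity
    have T1 : pvbBracket n m ℓ ρ f (pvbBracket n m ℓ ρ h s) p
        = ρ (diffAt n f p) (pvbBracket n m ℓ ρ h s p)
          + fderiv ℝ (pvbBracket n m ℓ ρ h s) p (hamVF n ℓ f p) := rfl
    have T2 : pvbBracket n m ℓ ρ h (pvbBracket n m ℓ ρ f s) p
        = ρ (diffAt n h p) (pvbBracket n m ℓ ρ f s p)
          + fderiv ℝ (pvbBracket n m ℓ ρ f s) p (hamVF n ℓ h p) := rfl
    have T3 : pvbBracket n m ℓ ρ (liePoisson n ℓ f h) s p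
        = ρ (diffAt n (liePoisson n ℓ f h) p) (s p)
          + fderiv ℝ s p (hamv n ℓ p (diffAt n (liePoisson n ℓ f h) p)) := rfl
    rw [T1, T2, T3, fderiv_pvb_apply ℓ ρ hh hs p (hamVF n ℓ f p),
      fderiv_pvb_apply ℓ ρ hf hs p (hamVF n ℓ h p),
      diffAt_liePoisson ℓ hskew hf hh p, pvbBracket, pvbBracket]
    simp only [map_add, map_sub, LinearMap.add_apply, LinearMap.sub_apply,
      hamv_add_right, hamv_sub_right]
    rw [hrep (diffAt n f p) (diffAt n h p),
      ← jacobi_hamv ℓ hjacobi p (diffAt n f p) (diffAt n h p),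
      snd_symm hs p (hamVF n ℓ f p) (hamVF n ℓ h p)]
    simp only [map_add, map_sub, LinearMap.add_apply, LinearMap.sub_apply,
      LinearMap.comp_apply, hamv_sub_right, ← hamVF_eq_hamv]
    abel
end

section
/- Let V be a finite-dimensional complex Hermitian inner-product space and σ : W → End(V) a linear map from a real vector space W of positive dimension such that each σ(α) is skew-Hermitian and all operators σ(α), for α ≠ 0, are conjugate to each other in GL(V). Then σ = 0. -/
/-!
Since `σ (a • α) = a • σ α` is conjugate to `σ α` for `a ≠ 0`, the finite set of eigenvalues of
`σ α` is stable under multiplication by every positive integer, hence contained in `{0}`. If `T` is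
skew-Hermitian then `i • T` is symmetric, hence diagonal in an orthonormal basis, so `T` vanishes
once `0` is its only possible eigenvalue.
-/

open Module End InnerProductSpace

namespace Module.End

variable {K V : Type*} [Field K] [AddCommGroup V] [Module K V] {f : End K V} {μ : K}

theorem HasEigenvalue.smul (h : f.HasEigenvalue μ) (a : K) :
    (a • f).HasEigenvalue (a * μ) := by
  obtain ⟨v, hv⟩ := h.exists_hasEigenvector
  refine hasEigenvalue_of_hasEigenvector ⟨?_, hv.2⟩
  rw [mem_eigenspace_iff, LinearMap.smul_apply, hv.apply_eq_smul, smul_smul]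

theorem HasEigenvalue.conj (h : f.HasEigenvalue μ) (e : V ≃ₗ[K] V) :
    (e.conj f).HasEigenvalue μ := by
  obtain ⟨v, hv⟩ := h.exists_hasEigenvector
  refine hasEigenvalue_of_hasEigenvector (x := e v) ⟨?_, by simpa using hv.2⟩
  rw [mem_eigenspace_iff, e.conj_apply_apply, e.symm_apply_apply, hv.apply_eq_smul, map_smul]

end Module.End

theorem Set.Finite.eq_zero_of_forall_natCast_succ_mul_mem {K : Type*} [Field K] [CharZero K]
    {S : Set K} (hS : S.Finite) {μ : K} (h : ∀ n : ℕ, ((n : K) + 1) * μ ∈ S) : μ = 0 := by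
  by_contra hμ
  refine Set.infinite_of_injective_forall_mem (fun m n hmn => ?_) h hS
  simpa using mul_right_cancel₀ hμ hmn

namespace LinearMap

theorem IsSymmetric.eq_zero_of_forall_hasEigenvalue_eq_zero {𝕜 E : Type*} [RCLike 𝕜]
    [NormedAddCommGroup E] [InnerProductSpace 𝕜 E] [FiniteDimensional 𝕜 E] {T : E →ₗ[𝕜] E}
    (hT : T.IsSymmetric) (h : ∀ μ, HasEigenvalue T μ → μ = 0) : T = 0 := by
  refine (hT.eigenvectorBasis rfl).toBasis.ext fun i => ?_
  have hμ := hT.hasEigenvalue_eigenvalues rfl i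
  rw [OrthonormalBasis.coe_toBasis, hT.apply_eigenvectorBasis, h _ hμ, zero_smul, zero_apply]

theorem eq_zero_of_skew_of_forall_hasEigenvalue_eq_zero {E : Type*} [NormedAddCommGroup E]
    [InnerProductSpace ℂ E] [FiniteDimensional ℂ E] {T : E →ₗ[ℂ] E}
    (hT : ∀ x y, ⟪T x, y⟫_ℂ = -⟪x, T y⟫_ℂ)
    (h : ∀ μ, HasEigenvalue T μ → μ = 0) : T = 0 := by
  have hsymm : (Complex.I • T).IsSymmetric := fun x y => by
    simp only [smul_apply, inner_smul_left, inner_smul_right, hT, Complex.conj_I]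
    ring
  have hIT : Complex.I • T = 0 := hsymm.eq_zero_of_forall_hasEigenvalue_eq_zero fun μ hμ => by
    have hTμ : HasEigenvalue T (Complex.I⁻¹ * μ) := by
      simpa [smul_smul] using hμ.smul Complex.I⁻¹
    simpa using h _ hTμ
  simpa using hIT

end LinearMap

theorem skew_hermitian_conjugate_family_is_zero_general
    (V : Type*) [NormedAddCommGroup V] [InnerProductSpace ℂ V] [FiniteDimensional ℂ V]
    (W : Type*) [AddCommGroup W] [Module ℝ W]
    (σ : W → (V →ₗ[ℂ] V))
    -- ℝ-linearity of `σ`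
    (hsmul : ∀ (a : ℝ) (α : W), σ (a • α) = (a : ℂ) • σ α)
    -- each `σ(α)` is skew-Hermitian
    (hskew : ∀ (α : W) (x y : V), inner ℂ (σ α x) y = - (inner ℂ x (σ α y) : ℂ))
    -- all `σ(α)`, `α ≠ 0`, are conjugate to one another in `GL(V)`
    (hconj : ∀ α β : W, α ≠ 0 → β ≠ 0 → ∃ g : V ≃ₗ[ℂ] V,
        ∀ x : V, σ β x = g (σ α (g.symm x))) :
    ∀ α : W, σ α = 0 := by
  intro α
  rcases eq_or_ne α 0 with rfl | hα
  · simpa using hsmul 0 0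
  refine LinearMap.eq_zero_of_skew_of_forall_hasEigenvalue_eq_zero (hskew α) fun μ hμ => ?_
  refine (finite_hasEigenvalue (σ α)).eq_zero_of_forall_natCast_succ_mul_mem fun n => ?_
  obtain ⟨g, hg⟩ := hconj (((n : ℝ) + 1) • α) α (smul_ne_zero (by positivity) hα) hα
  have hσα : σ α = g.conj (σ (((n : ℝ) + 1) • α)) := LinearMap.ext fun x => by
    rw [hg, LinearEquiv.conj_apply_apply]
  rw [hσα, hsmul, Complex.ofReal_add, Complex.ofReal_natCast, Complex.ofReal_one]
  exact (hμ.smul _).conj g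

theorem skew_hermitian_conjugate_family_is_zero
    (V : Type*) [NormedAddCommGroup V] [InnerProductSpace ℂ V] [FiniteDimensional ℂ V]
    (W : Type*) [AddCommGroup W] [Module ℝ W] [Nontrivial W]
    (σ : W → (V →ₗ[ℂ] V))
    -- ℝ-linearity of `σ`
    (hadd : ∀ α β : W, σ (α + β) = σ α + σ β)
    (hsmul : ∀ (a : ℝ) (α : W), σ (a • α) = (a : ℂ) • σ α)
    -- each `σ(α)` is skew-Hermitian
    (hskew : ∀ (α : W) (x y : V), inner ℂ (σ α x) y = - (inner ℂ x (σ α y) : ℂ))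
    -- all `σ(α)`, `α ≠ 0`, are conjugate to one another in `GL(V)`
    (hconj : ∀ α β : W, α ≠ 0 → β ≠ 0 → ∃ g : V ≃ₗ[ℂ] V,
        ∀ x : V, σ β x = g (σ α (g.symm x))) :
    ∀ α : W, σ α = 0 :=
  skew_hermitian_conjugate_family_is_zero_general V W σ hsmul hskew hconj
end
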